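/- Existence of flat families of starlike partitions of unity: let Ω ⊆ ℝⁿ be a bounded Lipschitz domain. Then there exist k ∈ ℕ and, for each j ∈ {1,…,k}, a finite family of open sets U₁^{(j)},…,U_{m_j}^{(j)} ⊆ ℝⁿ whose union contains the closure of Ω, such that each U_i^{(j)} ∩ Ω is starlike with respect to some open ball, together with functions χ_i^{(j)} ∈ C_c^∞(ℝⁿ) with supp χ_i^{(j)} ⊆ U_i^{(j)} and Σ_{i=1}^{m_j} χ_i^{(j)}(x) = 1 for all x in some neighborhood of the closure of Ω, with the following property: for every x₀ ∈ ℝⁿ there exists j ∈ {1,…,k} such that every function χ_i^{(j)}, i = 1,…,m_j, is constant on some neighborhood of x₀. -/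

import Mathlib

/-!
Every point of the closure of `Ω` has an open neighbourhood `W` such that `W ∩ Ω` is starlike
with respect to a ball: at interior points a ball inside `Ω`; at boundary points, in the
coordinates of the local Lipschitz graph, a convex set of small horizontal radius `ρ` intersected
with the region below the graph, which is starlike with respect to a ball centred `(3L + 1)ρ`
below the boundary point. By compactness, finitely many smooth bumps `g₁, …, g_N`, each supported
in one such `W` and one of them equal to `1` near any point of the closure, suffice.

From them we build `N + 1` partitions of unity `χᵢ = bᵢ ∏_{l < i} (1 - b_l)`, where in the `j`-th
one `bᵢ = s((2N + 1) gᵢ - 2j)` for a smooth step `s` from `0` on `(-∞, 0]` to `1` on `[1, ∞)`.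
The transition bands `[2j, 2j + 1] / (2N + 1)` of these partitions are pairwise disjoint, so by
pigeonhole the `N` values `gᵢ(x₀)` all avoid the band of some `j`; every `bᵢ` of that partition,
hence every `χᵢ`, is then constant near `x₀`.
-/

open MeasureTheory Set

noncomputable section

/-- A bounded Lipschitz domain in `ℝⁿ` (`n = m+1`): a bounded connected open set such that
near every boundary point, after a rigid motion, the domain coincides with the region below
the graph of a Lipschitz function. -/
def IsBddLipschitzDomain {m : ℕ} (Ω : Set (EuclideanSpace ℝ (Fin (m + 1)))) : Prop :=
  IsOpen Ω ∧ IsConnected Ω ∧ Bornology.IsBounded Ω ∧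
    ∀ p ∈ frontier Ω, ∃ U : Set (EuclideanSpace ℝ (Fin (m + 1))),
      IsOpen U ∧ p ∈ U ∧
        ∃ (g : EuclideanSpace ℝ (Fin (m + 1)) ≃ᵢ EuclideanSpace ℝ (Fin (m + 1)))
          (φ : EuclideanSpace ℝ (Fin m) → ℝ) (L : NNReal),
          LipschitzWith L φ ∧
            g '' (U ∩ Ω) =
              (g '' U) ∩ {x : EuclideanSpace ℝ (Fin (m + 1)) |
                x (Fin.last m) < φ (WithLp.toLp 2 (fun i => x (Fin.castSucc i)))}

open Function Metric Filter Topology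
open scoped Manifold ContDiff

section Starlike

variable {E F : Type*} [AddCommGroup E] [Module ℝ E] [AddCommGroup F] [Module ℝ F]

def IsStarlikeWrt (A B : Set E) : Prop :=
  ∀ x ∈ A, convexHull ℝ ({x} ∪ B) ⊆ A

theorem Convex.isStarlikeWrt {A B : Set E} (hA : Convex ℝ A) (hBA : B ⊆ A) :
    IsStarlikeWrt A B := fun _ hx =>
  convexHull_min (union_subset (singleton_subset_iff.2 hx) hBA) hA

theorem isStarlikeWrt_of_segment_subset {A B : Set E} (hB : Convex ℝ B)
    (h : ∀ x ∈ A, ∀ y ∈ B, segment ℝ x y ⊆ A) : IsStarlikeWrt A B := by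
  intro x hx
  rcases B.eq_empty_or_nonempty with rfl | hBne
  · simpa using hx
  rw [singleton_union, convexHull_insert hBne, hB.convexHull_eq, convexJoin_singleton_left]
  exact iUnion₂_subset (h x hx)

theorem IsStarlikeWrt.image {A B : Set E} (h : IsStarlikeWrt A B) (f : E →ᵃ[ℝ] F) :
    IsStarlikeWrt (f '' A) (f '' B) := by
  rintro _ ⟨x, hx, rfl⟩
  rw [← image_singleton, ← image_union, ← f.image_convexHull]
  exact image_mono (h x hx)

end Starlike

theorem LipschitzWith.lt_apply_add_smul {F : Type*} [SeminormedAddCommGroup F] [NormedSpace ℝ F]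
    {φ : F → ℝ} {L : NNReal} (hφ : LipschitzWith L φ) {x y : F} {s t a b : ℝ}
    (ha : 0 ≤ a) (hb : 0 ≤ b) (hab : a + b = 1) (hs : s < φ x) (ht : t + L * dist x y < φ x) :
    a * s + b * t < φ (a • x + b • y) := by
  have hxz : dist x (a • x + b • y) = b * dist x y := by
    rw [dist_eq_norm, dist_eq_norm, eq_sub_of_add_eq hab,
      show x - ((1 - b) • x + b • y) = b • (x - y) by module, norm_smul, Real.norm_of_nonneg hb]
  have hφz : φ x - L * (b * dist x y) ≤ φ (a • x + b • y) := by
    have := (le_abs_self _).trans (hφ.dist_le_mul x (a • x + b • y))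
    rw [hxz] at this
    linarith
  have hcombo : a * s + b * (t + L * dist x y) < φ x := convex_Iio (φ x) hs ht ha hb hab
  nlinarith

section Graph

variable {m : ℕ}

def euclideanInit : EuclideanSpace ℝ (Fin (m + 1)) →L[ℝ] EuclideanSpace ℝ (Fin m) :=
  LinearMap.toContinuousLinearMap
    { toFun x := WithLp.toLp 2 fun i => x i.castSucc
      map_add' _ _ := rfl
      map_smul' _ _ := rfl }

@[simp]
theorem euclideanInit_apply (x : EuclideanSpace ℝ (Fin (m + 1))) (i : Fin m) :
    euclideanInit x i = x i.castSucc :=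
  rfl

theorem dist_euclideanInit_le (x y : EuclideanSpace ℝ (Fin (m + 1))) :
    dist (euclideanInit x) (euclideanInit y) ≤ dist x y := by
  rw [dist_eq_norm, dist_eq_norm, ← map_sub, EuclideanSpace.norm_eq, EuclideanSpace.norm_eq,
    Fin.sum_univ_castSucc]
  exact Real.sqrt_le_sqrt (le_add_of_nonneg_right (sq_nonneg _))

def subgraph (φ : EuclideanSpace ℝ (Fin m) → ℝ) : Set (EuclideanSpace ℝ (Fin (m + 1))) :=
  {x | x (Fin.last m) < φ (euclideanInit x)}

theorem isStarlikeWrt_inter_subgraph {φ : EuclideanSpace ℝ (Fin m) → ℝ} {L : NNReal}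
    (hφ : LipschitzWith L φ) {q : EuclideanSpace ℝ (Fin (m + 1))}
    (hq : q (Fin.last m) ≤ φ (euclideanInit q)) {ρ : ℝ} {K : Set (EuclideanSpace ℝ (Fin (m + 1)))}
    (hK : Convex ℝ K) (hKq : K ⊆ euclideanInit ⁻¹' ball (euclideanInit q) ρ)
    (hBK : ball (q - ((3 * L + 1) * ρ) • EuclideanSpace.single (Fin.last m) 1) ρ ⊆ K) :
    IsStarlikeWrt (K ∩ subgraph φ)
      (ball (q - ((3 * L + 1) * ρ) • EuclideanSpace.single (Fin.last m) 1) ρ) := by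
  set c := q - ((3 * L + 1) * ρ) • EuclideanSpace.single (Fin.last m) (1 : ℝ)
  have hc_last : c (Fin.last m) = q (Fin.last m) - (3 * L + 1) * ρ := by simp [c]
  refine isStarlikeWrt_of_segment_subset (convex_ball c ρ) fun x ⟨hxK, hxS⟩ y hy => ?_
  have hyK := hBK hy
  have hx_init : dist (euclideanInit x) (euclideanInit q) < ρ := hKq hxK
  have hxy_init : dist (euclideanInit x) (euclideanInit y) < 2 * ρ := by
    linarith [dist_triangle_right (euclideanInit x) (euclideanInit y) (euclideanInit q),
      mem_ball.1 (hKq hyK)]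
  have hy_last : y (Fin.last m) < q (Fin.last m) - 3 * L * ρ := by
    have := (PiLp.norm_apply_le (y - c) (Fin.last m)).trans_lt (mem_ball_iff_norm.1 hy)
    rw [PiLp.sub_apply, hc_last, Real.norm_eq_abs, abs_lt] at this
    linarith
  have hφx : q (Fin.last m) - L * ρ ≤ φ (euclideanInit x) := by
    have := (le_abs_self _).trans (hφ.dist_le_mul (euclideanInit q) (euclideanInit x))
    rw [dist_comm] at this
    nlinarith [L.2]
  rintro _ ⟨a, b, ha, hb, hab, rfl⟩
  refine ⟨hK.segment_subset hxK hyK ⟨a, b, ha, hb, hab, rfl⟩, ?_⟩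
  show _ < φ (euclideanInit (a • x + b • y))
  rw [map_add, map_smul, map_smul]
  simp only [PiLp.add_apply, PiLp.smul_apply, smul_eq_mul]
  -- `y` is `3Lρ` below `q`, the graph over `x` at most `Lρ` below `q`, and slope `L` over the
  -- horizontal distance `< 2ρ` from `x` to `y` costs at most `2Lρ`.
  exact hφ.lt_apply_add_smul ha hb hab hxS (by nlinarith [L.2])

end Graph

section LipschitzDomain

variable {m : ℕ}

theorem exists_isStarlikeWrt_nhds_of_localGraph {Ω U : Set (EuclideanSpace ℝ (Fin (m + 1)))}
    {p : EuclideanSpace ℝ (Fin (m + 1))} (hU : IsOpen U) (hpU : p ∈ U) (hp : p ∈ closure Ω)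
    (g : EuclideanSpace ℝ (Fin (m + 1)) ≃ᵢ EuclideanSpace ℝ (Fin (m + 1)))
    {φ : EuclideanSpace ℝ (Fin m) → ℝ} {L : NNReal} (hφ : LipschitzWith L φ)
    (hg : g '' (U ∩ Ω) = g '' U ∩ subgraph φ) :
    ∃ W, IsOpen W ∧ p ∈ W ∧ ∃ c r, 0 < r ∧ IsStarlikeWrt (W ∩ Ω) (ball c r) := by
  set q := g p
  have hq : q (Fin.last m) ≤ φ (euclideanInit q) := by
    have : q ∈ closure (g '' (U ∩ Ω)) := image_closure_subset_closure_image g.continuous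
      (mem_image_of_mem g (hU.inter_closure ⟨hpU, hp⟩))
    rw [hg] at this
    exact closure_lt_subset_le (by fun_prop) (hφ.continuous.comp euclideanInit.continuous)
      (closure_mono inter_subset_right this)
  obtain ⟨ρ₀, hρ₀, hball⟩ :=
    Metric.isOpen_iff.1 (g.toHomeomorph.isOpenMap U hU) q (mem_image_of_mem g hpU)
  set ρ := ρ₀ / (3 * L + 2)
  have hρ : 0 < ρ := by positivity
  set K := ball q ρ₀ ∩ euclideanInit ⁻¹' ball (euclideanInit q) ρ
  set c := q - ((3 * L + 1) * ρ) • EuclideanSpace.single (Fin.last m) (1 : ℝ)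
  have hBK : ball c ρ ⊆ K := by
    intro y hy
    have hcq : ρ + dist c q = ρ₀ := by
      have hρ₀ : (3 * L + 2) * ρ = ρ₀ := mul_div_cancel₀ _ (by positivity)
      rw [dist_eq_norm, sub_sub_cancel_left, norm_neg, norm_smul, PiLp.norm_single, norm_one,
        mul_one, Real.norm_of_nonneg (by positivity)]
      linarith
    have hc_init : euclideanInit c = euclideanInit q := by
      ext i
      simp [c, (Fin.castSucc_lt_last i).ne]
    refine ⟨ball_subset_ball' hcq.le hy, ?_⟩
    rw [mem_preimage, mem_ball, ← hc_init]
    exact (dist_euclideanInit_le y c).trans_lt hy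
  have hWΩ : g ⁻¹' K ∩ Ω = g.symm '' (K ∩ subgraph φ) := by
    rw [g.image_symm]
    ext x
    have hx : x ∈ U ∩ Ω ↔ x ∈ U ∧ g x ∈ subgraph φ := by
      rw [← g.injective.mem_set_image, hg, mem_inter_iff, g.injective.mem_set_image]
    have hxU : g x ∈ K → x ∈ U := fun hxK => g.injective.mem_set_image.1 (hball hxK.1)
    exact ⟨fun ⟨hxK, hxΩ⟩ => ⟨hxK, (hx.1 ⟨hxU hxK, hxΩ⟩).2⟩,
      fun ⟨hxK, hxS⟩ => ⟨hxK, (hx.2 ⟨hxU hxK, hxS⟩).2⟩⟩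
  refine ⟨g ⁻¹' K, (isOpen_ball.inter (isOpen_ball.preimage euclideanInit.continuous)).preimage
    g.continuous, ⟨mem_ball_self hρ₀, mem_ball_self hρ⟩, g.symm c, ρ, hρ, ?_⟩
  rw [hWΩ, ← g.symm.image_ball]
  exact (isStarlikeWrt_inter_subgraph hφ hq ((convex_ball _ _).inter
    ((convex_ball _ _).linear_preimage euclideanInit.toLinearMap)) inter_subset_right hBK).image
    g.symm.toRealAffineIsometryEquiv.toAffineEquiv.toAffineMap

theorem IsBddLipschitzDomain.exists_isStarlikeWrt_nhds {Ω : Set (EuclideanSpace ℝ (Fin (m + 1)))}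
    (hΩ : IsBddLipschitzDomain Ω) {p : EuclideanSpace ℝ (Fin (m + 1))} (hp : p ∈ closure Ω) :
    ∃ W, IsOpen W ∧ p ∈ W ∧ ∃ c r, 0 < r ∧ IsStarlikeWrt (W ∩ Ω) (ball c r) := by
  obtain ⟨hΩopen, -, -, hΩgraph⟩ := hΩ
  by_cases hpΩ : p ∈ Ω
  · obtain ⟨r, hr, hrΩ⟩ := Metric.isOpen_iff.1 hΩopen p hpΩ
    refine ⟨ball p r, isOpen_ball, mem_ball_self hr, p, r, hr, ?_⟩
    rw [inter_eq_left.2 hrΩ]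
    exact (convex_ball p r).isStarlikeWrt subset_rfl
  · obtain ⟨U, hU, hpU, g, φ, L, hφ, hg⟩ := hΩgraph p ⟨hp, by rwa [hΩopen.interior_eq]⟩
    exact exists_isStarlikeWrt_nhds_of_localGraph hU hpU hp g hφ hg

end LipschitzDomain

section OrderedPartition

variable {ι X : Type*} [Fintype ι] [LinearOrder ι]

def orderedPartition (b : ι → X → ℝ) (i : ι) (x : X) : ℝ :=
  b i x * ∏ l with l < i, (1 - b l x)

theorem sum_orderedPartition (b : ι → X → ℝ) (x : X) :
    ∑ i, orderedPartition b i x = 1 - ∏ i, (1 - b i x) := by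
  rw [Finset.prod_one_sub_ordered, sub_sub_cancel]
  rfl

theorem sum_orderedPartition_eq_one {b : ι → X → ℝ} {x : X} {i : ι} (hi : b i x = 1) :
    ∑ i, orderedPartition b i x = 1 := by
  rw [sum_orderedPartition, Finset.prod_eq_zero (Finset.mem_univ i) (by rw [hi, sub_self]),
    sub_zero]

theorem support_orderedPartition_subset (b : ι → X → ℝ) (i : ι) :
    support (orderedPartition b i) ⊆ support (b i) :=
  fun _ hx => left_ne_zero_of_mul hx

theorem contDiff_orderedPartition {E : Type*} [NormedAddCommGroup E] [NormedSpace ℝ E]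
    {b : ι → E → ℝ} {n : WithTop ℕ∞} (hb : ∀ i, ContDiff ℝ n (b i)) (i : ι) :
    ContDiff ℝ n (orderedPartition b i) :=
  (hb i).mul (contDiff_prod fun l _ => contDiff_const.sub (hb l))

theorem eventuallyConst_orderedPartition {l : Filter X} {b : ι → X → ℝ}
    (hb : ∀ i, EventuallyConst (b i) l) (i : ι) : EventuallyConst (orderedPartition b i) l := by
  choose c hc using fun i => (hb i).eventuallyEq_const
  refine (EventuallyConst.const (orderedPartition (fun i _ => c i) i ())).congr ?_
  filter_upwards [eventually_all.2 hc] with x hx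
  simp only [orderedPartition, hx]

end OrderedPartition

theorem eventuallyConst_smoothTransition {t : ℝ} (ht : t ∉ Icc 0 1) :
    EventuallyConst Real.smoothTransition (𝓝 t) := by
  rw [mem_Icc, not_and_or, not_le, not_le] at ht
  rcases ht with ht | ht
  · refine (EventuallyConst.const 0).congr ?_
    filter_upwards [Iio_mem_nhds ht] with s hs
    exact (Real.smoothTransition.zero_of_nonpos (le_of_lt hs)).symm
  · refine (EventuallyConst.const 1).congr ?_
    filter_upwards [Ioi_mem_nhds ht] with s hs
    exact (Real.smoothTransition.one_of_one_le (le_of_lt hs)).symm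

theorem exists_forall_notMem_of_pairwise_disjoint {ι κ α : Type*} [Fintype ι] [Fintype κ]
    (hcard : Fintype.card κ < Fintype.card ι) {I : ι → Set α} (hI : Pairwise (Disjoint on I))
    (y : κ → α) : ∃ j, ∀ i, y i ∉ I j := by
  by_contra! h
  choose f hf using h
  obtain ⟨j, j', hne, hjj'⟩ := Fintype.exists_ne_map_eq_of_card_lt f hcard
  exact Set.disjoint_left.1 (hI hne) (hf j) (hjj' ▸ hf j')

section BandPartition

def bandStep (N j : ℕ) (t : ℝ) : ℝ :=
  Real.smoothTransition ((2 * N + 1) * t - 2 * j)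

theorem bandStep_zero (N j : ℕ) : bandStep N j 0 = 0 :=
  Real.smoothTransition.zero_of_nonpos (by simp)

theorem bandStep_one {N j : ℕ} (hj : j ≤ N) : bandStep N j 1 = 1 :=
  Real.smoothTransition.one_of_one_le <| by
    have : (j : ℝ) ≤ N := by exact_mod_cast hj
    linarith

theorem exists_forall_bandStep_notMem_Icc (N : ℕ) (y : Fin N → ℝ) :
    ∃ j : Fin (N + 1), ∀ i, (2 * N + 1) * y i - 2 * j ∉ Icc (0 : ℝ) 1 := by
  refine exists_forall_notMem_of_pairwise_disjoint (by simp)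
    (I := fun j : Fin (N + 1) => {t : ℝ | (2 * N + 1) * t - 2 * j ∈ Icc 0 1}) ?_ y
  intro j j' hne
  refine Set.disjoint_left.2 fun t ⟨h₁, h₂⟩ ⟨h₁', h₂'⟩ => hne (Fin.ext ?_)
  have h : (j : ℝ) < j' + 1 := by linarith
  have h' : (j' : ℝ) < j + 1 := by linarith
  norm_cast at h h'
  omega

variable {X : Type*} {N : ℕ}

def bandPartition (g : Fin N → X → ℝ) (j : ℕ) : Fin N → X → ℝ :=
  orderedPartition fun i x => bandStep N j (g i x)

theorem support_bandPartition_subset (g : Fin N → X → ℝ) (j : ℕ) (i : Fin N) :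
    support (bandPartition g j i) ⊆ support (g i) := by
  refine (support_orderedPartition_subset _ i).trans fun x hx hgx => hx ?_
  simp only [hgx, bandStep_zero]

theorem sum_bandPartition_eq_one {g : Fin N → X → ℝ} {j : ℕ} (hj : j ≤ N) {x : X} {i : Fin N}
    (hi : g i x = 1) : ∑ i, bandPartition g j i x = 1 :=
  sum_orderedPartition_eq_one (by rw [hi, bandStep_one hj])

theorem contDiff_bandPartition {E : Type*} [NormedAddCommGroup E] [NormedSpace ℝ E]
    {g : Fin N → E → ℝ} {n : ℕ∞} (hg : ∀ i, ContDiff ℝ n (g i)) (j : ℕ) (i : Fin N) :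
    ContDiff ℝ n (bandPartition g j i) :=
  contDiff_orderedPartition (fun i => Real.smoothTransition.contDiff.comp
    ((contDiff_const.mul (hg i)).sub contDiff_const)) i

theorem exists_eventuallyConst_bandPartition [TopologicalSpace X] {g : Fin N → X → ℝ}
    (hg : ∀ i, Continuous (g i)) (x₀ : X) :
    ∃ j : Fin (N + 1), ∀ i, EventuallyConst (bandPartition g j i) (𝓝 x₀) := by
  obtain ⟨j, hj⟩ := exists_forall_bandStep_notMem_Icc N fun i => g i x₀
  refine ⟨j, eventuallyConst_orderedPartition fun i => ?_⟩
  exact (eventuallyConst_smoothTransition (hj i)).comp_tendsto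
    (((continuous_const.mul (hg i)).sub continuous_const).tendsto x₀)

end BandPartition

theorem IsCompact.exists_fin_smoothBumps {E : Type*} [NormedAddCommGroup E] [NormedSpace ℝ E]
    [FiniteDimensional ℝ E] {s : Set E} (hs : IsCompact s) {W : E → Set E}
    (hW : ∀ x ∈ s, W x ∈ 𝓝 x) :
    ∃ (N : ℕ) (c : Fin N → E) (g : Fin N → E → ℝ), (∀ i, c i ∈ s) ∧
      (∀ i, ContDiff ℝ ∞ (g i)) ∧ (∀ i, HasCompactSupport (g i)) ∧
      (∀ i, tsupport (g i) ⊆ W (c i)) ∧ ∀ x ∈ s, ∃ i, g i =ᶠ[𝓝 x] 1 := by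
  obtain ⟨ι, f, hf⟩ := SmoothBumpCovering.exists_isSubordinate 𝓘(ℝ, E) hs.isClosed hW
  have : Finite ι := by
    refine Set.finite_univ_iff.1 ((f.locallyFinite.finite_nonempty_inter_compact hs).subset ?_)
    exact fun i _ => ⟨f.c i, (f i).c_mem_support, f.c_mem' i⟩
  obtain ⟨N, ⟨e⟩⟩ := Finite.exists_equiv_fin ι
  refine ⟨N, fun i => f.c (e.symm i), fun i => f (e.symm i), fun i => f.c_mem' _,
    fun i => contMDiff_iff_contDiff.1 (f (e.symm i)).contMDiff, fun i => (f _).hasCompactSupport,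
    fun i => hf _, fun x hx => ?_⟩
  obtain ⟨i, hi⟩ := f.eventuallyEq_one' x hx
  obtain ⟨k, rfl⟩ := e.symm.surjective i
  exact ⟨k, hi⟩

theorem stmt17 {m : ℕ} (Ω : Set (EuclideanSpace ℝ (Fin (m + 1))))
    (hΩ : IsBddLipschitzDomain Ω) :
    ∃ (k : ℕ) (mj : Fin k → ℕ)
      (U : (j : Fin k) → Fin (mj j) → Set (EuclideanSpace ℝ (Fin (m + 1))))
      (χ : (j : Fin k) → Fin (mj j) → EuclideanSpace ℝ (Fin (m + 1)) → ℝ),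
      -- open coverings of the closure of Ω
      (∀ j i, IsOpen (U j i)) ∧
      (∀ j, closure Ω ⊆ ⋃ i, U j i) ∧
      -- each U_i^(j) ∩ Ω is starlike with respect to some open ball
      (∀ j i, ∃ (c : EuclideanSpace ℝ (Fin (m + 1))) (r : ℝ), 0 < r ∧
        ∀ x ∈ U j i ∩ Ω, convexHull ℝ ({x} ∪ Metric.ball c r) ⊆ U j i ∩ Ω) ∧
      -- subordinate smooth partitions of unity
      (∀ j i, ContDiff ℝ (⊤ : ℕ∞) (χ j i) ∧ HasCompactSupport (χ j i) ∧
        tsupport (χ j i) ⊆ U j i) ∧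
      (∀ j, ∃ V : Set (EuclideanSpace ℝ (Fin (m + 1))), IsOpen V ∧ closure Ω ⊆ V ∧
        ∀ x ∈ V, (∑ i, χ j i x) = 1) ∧
      -- flatness: near every point, one of the partitions of unity is locally constant
      (∀ x₀ : EuclideanSpace ℝ (Fin (m + 1)), ∃ j : Fin k, ∀ i : Fin (mj j),
        ∃ c : ℝ, ∀ᶠ x in nhds x₀, χ j i x = c) := by
  choose! W hWopen hWmem hWstar using fun p (hp : p ∈ closure Ω) =>
    hΩ.exists_isStarlikeWrt_nhds hp
  obtain ⟨N, c, g, hc, hg, hgc, hgW, hg1⟩ := hΩ.2.2.1.isCompact_closure.exists_fin_smoothBumps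
    fun p hp => (hWopen p hp).mem_nhds (hWmem p hp)
  refine ⟨N + 1, fun _ => N, fun _ i => W (c i), fun j => bandPartition g j,
    fun _ i => hWopen _ (hc i), fun _ x hx => ?_, fun _ i => hWstar _ (hc i),
    fun j i => ⟨contDiff_bandPartition hg j i, (hgc i).mono (support_bandPartition_subset g j i),
      (closure_mono (support_bandPartition_subset g j i)).trans (hgW i)⟩,
    fun j => ⟨{x | ∃ i, g i =ᶠ[𝓝 x] 1}, ?_, hg1, fun x ⟨i, hi⟩ =>
      sum_bandPartition_eq_one j.is_le hi.eq_of_nhds⟩,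
    fun x₀ => ?_⟩
  · obtain ⟨i, hi⟩ := hg1 x hx
    exact mem_iUnion.2 ⟨i, hgW i (subset_tsupport _ (by simp [hi.eq_of_nhds]))⟩
  · simp only [ofPred_exists]
    exact isOpen_iUnion fun i => isOpen_setOfPred_eventually_nhds
  · obtain ⟨j, hj⟩ := exists_eventuallyConst_bandPartition (fun i => (hg i).continuous) x₀
    exact ⟨j, fun i => (hj i).eventuallyEq_const⟩

end
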